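/- arXiv:1711.00284 — 10 statements merged into one kernel-verified Lean document; each statement's English description precedes it below -/
import Mathlib

section
/- For every scaling factor S > 0, the optimum of the floor-scaled graph satisfies C_opt(G)/S − n ≤ C_opt(G↓S) ≤ C_opt(G)/S. -/
/-- `IsWalk tl hd u v p` : the list of edges `p` forms a walk from `u` to `v`
in the directed multigraph whose edges `e` go from `tl e` to `hd e`. -/
def IsWalk {V E : Type} (tl hd : E → V) : V → V → List E → Prop
  | u, v, [] => u = v
  | u, v, e :: es => tl e = u ∧ IsWalk tl hd (hd e) v es

/-- `IsPath tl hd u v p` : `p` is a walk from `u` to `v` visiting pairwise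
distinct vertices. -/
def IsPath {V E : Type} (tl hd : E → V) (u v : V) (p : List E) : Prop :=
  IsWalk tl hd u v p ∧ (u :: p.map hd).Nodup

/-! Rounding every edge cost `c e / S` down loses less than `1` per edge, and a path has fewer
than `n` edges. Hence the scaled cost of any path lies within `n` below its exact cost divided
by `S`; applying this to the two optimal paths, each optimal for one cost function, gives both
bounds. -/

theorem IsPath.length_lt_card {V E : Type} [Fintype V] {tl hd : E → V} {u v : V} {p : List E}
    (hp : IsPath tl hd u v p) : p.length < Fintype.card V := by
  simpa using hp.2.length_le_card

section FloorSum

variable {ι K : Type*} [Field K] [LinearOrder K] [IsStrictOrderedRing K] [FloorRing K]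

theorem List.sum_map_floor_div_le (l : List ι) (f : ι → K) (S : K) :
    (l.map fun i => (⌊f i / S⌋ : K)).sum ≤ (l.map f).sum / S :=
  calc (l.map fun i => (⌊f i / S⌋ : K)).sum ≤ (l.map fun i => f i / S).sum :=
        List.sum_le_sum fun i _ => Int.floor_le _
    _ = (l.map f).sum / S := by simp only [div_eq_mul_inv, List.sum_map_mul_right]

theorem List.sum_map_div_sub_length_le_sum_map_floor (l : List ι) (f : ι → K) (S : K) :
    (l.map f).sum / S - l.length ≤ (l.map fun i => (⌊f i / S⌋ : K)).sum := by
  rw [sub_le_iff_le_add]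
  calc (l.map f).sum / S = (l.map fun i => f i / S).sum := by
        simp only [div_eq_mul_inv, List.sum_map_mul_right]
    _ ≤ (l.map fun i => (⌊f i / S⌋ : K) + 1).sum :=
        List.sum_le_sum fun i _ => (Int.lt_floor_add_one _).le
    _ = (l.map fun i => (⌊f i / S⌋ : K)).sum + l.length := by simp [List.sum_map_add]

end FloorSum

theorem stmt_0_general {V E : Type} [Fintype V]
    (tl hd : E → V) (c r : E → ℝ)
    (s t : V) (R : ℝ)
    -- `Copt` is the minimum cost of a feasible s–t path
    (Copt : ℝ)
    (hCopt₁ : ∃ p, IsPath tl hd s t p ∧ (p.map r).sum ≤ R ∧ (p.map c).sum = Copt)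
    (hCopt₂ : ∀ p, IsPath tl hd s t p → (p.map r).sum ≤ R → Copt ≤ (p.map c).sum)
    (S : ℝ) (hS : 0 < S)
    -- `CoptS` is the minimum floor-scaled cost of a feasible s–t path
    (CoptS : ℝ)
    (hCoptS₁ : ∃ p, IsPath tl hd s t p ∧ (p.map r).sum ≤ R ∧
      (p.map fun e => (⌊c e / S⌋ : ℝ)).sum = CoptS)
    (hCoptS₂ : ∀ p, IsPath tl hd s t p → (p.map r).sum ≤ R →
      CoptS ≤ (p.map fun e => (⌊c e / S⌋ : ℝ)).sum) :
    Copt / S - Fintype.card V ≤ CoptS ∧ CoptS ≤ Copt / S := by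
  obtain ⟨p, hp, hpr, rfl⟩ := hCopt₁
  obtain ⟨q, hq, hqr, rfl⟩ := hCoptS₁
  constructor
  · have hlen : (q.length : ℝ) ≤ Fintype.card V := by exact_mod_cast hq.length_lt_card.le
    calc (p.map c).sum / S - Fintype.card V ≤ (q.map c).sum / S - q.length := by
          gcongr
          exact hCopt₂ q hq hqr
      _ ≤ _ := q.sum_map_div_sub_length_le_sum_map_floor c S
  · exact (hCoptS₂ p hp hpr).trans (p.sum_map_floor_div_le c S)

/-- Lemma: for every scaling factor `S > 0`, the optimum `CoptS` of the
floor-scaled graph satisfies `Copt/S - n ≤ CoptS ≤ Copt/S`. -/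
theorem stmt_0 {V E : Type} [Fintype V] [Fintype E]
    (tl hd : E → V) (c r : E → ℝ)
    (hc : ∀ e, 0 ≤ c e) (hr : ∀ e, 0 ≤ r e)
    (hn : 2 ≤ Fintype.card V)
    (s t : V) (hst : s ≠ t) (R : ℝ) (hR : 0 ≤ R)
    -- `Copt` is the minimum cost of a feasible s–t path
    (Copt : ℝ)
    (hCopt₁ : ∃ p, IsPath tl hd s t p ∧ (p.map r).sum ≤ R ∧ (p.map c).sum = Copt)
    (hCopt₂ : ∀ p, IsPath tl hd s t p → (p.map r).sum ≤ R → Copt ≤ (p.map c).sum)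
    (S : ℝ) (hS : 0 < S)
    -- `CoptS` is the minimum floor-scaled cost of a feasible s–t path
    (CoptS : ℝ)
    (hCoptS₁ : ∃ p, IsPath tl hd s t p ∧ (p.map r).sum ≤ R ∧
      (p.map fun e => (⌊c e / S⌋ : ℝ)).sum = CoptS)
    (hCoptS₂ : ∀ p, IsPath tl hd s t p → (p.map r).sum ≤ R →
      CoptS ≤ (p.map fun e => (⌊c e / S⌋ : ℝ)).sum) :
    Copt / S - Fintype.card V ≤ CoptS ∧ CoptS ≤ Copt / S :=
  stmt_0_general tl hd c r s t R Copt hCopt₁ hCopt₂ S hS CoptS hCoptS₁ hCoptS₂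
end

section
/- For every scaling factor S > 0, the optimum of the ceiling-scaled graph satisfies C_opt(G)/S ≤ C_opt(G↑S) ≤ C_opt(G)/S + n. -/
namespace List

variable {α K : Type*}

theorem sum_map_div [DivisionSemiring K] (l : List α) (f : α → K) (S : K) :
    (l.map fun a => f a / S).sum = (l.map f).sum / S := by
  simp only [div_eq_mul_inv, sum_map_mul_right]

variable [Field K] [LinearOrder K] [IsStrictOrderedRing K] [FloorRing K]

theorem sum_map_le_sum_map_floor_add_one (l : List α) (f : α → K) :
    (l.map f).sum ≤ (l.map fun a => (⌊f a⌋ : K) + 1).sum :=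
  sum_le_sum fun a _ => (Int.lt_floor_add_one (f a)).le

theorem sum_map_floor_add_one_le (l : List α) (f : α → K) :
    (l.map fun a => (⌊f a⌋ : K) + 1).sum ≤ (l.map f).sum + l.length :=
  calc (l.map fun a => (⌊f a⌋ : K) + 1).sum
      ≤ (l.map fun a => f a + 1).sum := sum_le_sum fun a _ => by gcongr; exact Int.floor_le _
    _ = (l.map f).sum + l.length := by simp [sum_map_add]

end List

theorem stmt_1_general {V E : Type} [Fintype V]
    (tl hd : E → V) (c r : E → ℝ)
    (s t : V) (R : ℝ)
    -- `Copt` is the minimum cost of a feasible s–t path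
    (Copt : ℝ)
    (hCopt₁ : ∃ p, IsPath tl hd s t p ∧ (p.map r).sum ≤ R ∧ (p.map c).sum = Copt)
    (hCopt₂ : ∀ p, IsPath tl hd s t p → (p.map r).sum ≤ R → Copt ≤ (p.map c).sum)
    (S : ℝ) (hS : 0 < S)
    -- `CoptS` is the minimum ceiling-scaled cost of a feasible s–t path
    (CoptS : ℝ)
    (hCoptS₁ : ∃ p, IsPath tl hd s t p ∧ (p.map r).sum ≤ R ∧
      (p.map fun e => (⌊c e / S⌋ : ℝ) + 1).sum = CoptS)
    (hCoptS₂ : ∀ p, IsPath tl hd s t p → (p.map r).sum ≤ R →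
      CoptS ≤ (p.map fun e => (⌊c e / S⌋ : ℝ) + 1).sum) :
    Copt / S ≤ CoptS ∧ CoptS ≤ Copt / S + Fintype.card V := by
  constructor
  · obtain ⟨p, hp, hpr, rfl⟩ := hCoptS₁
    calc Copt / S ≤ (p.map c).sum / S := by gcongr; exact hCopt₂ p hp hpr
      _ = (p.map fun e => c e / S).sum := (p.sum_map_div c S).symm
      _ ≤ _ := p.sum_map_le_sum_map_floor_add_one _
  · obtain ⟨p, hp, hpr, rfl⟩ := hCopt₁
    calc CoptS ≤ (p.map fun e => (⌊c e / S⌋ : ℝ) + 1).sum := hCoptS₂ p hp hpr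
      _ ≤ (p.map fun e => c e / S).sum + p.length := p.sum_map_floor_add_one_le _
      _ ≤ (p.map c).sum / S + Fintype.card V := by
        rw [p.sum_map_div c S]
        gcongr
        exact hp.length_lt_card.le

/-- Lemma: for every scaling factor `S > 0`, the optimum `CoptS` of the
ceiling-scaled graph satisfies `Copt/S ≤ CoptS ≤ Copt/S + n`. -/
theorem stmt_1 {V E : Type} [Fintype V] [Fintype E]
    (tl hd : E → V) (c r : E → ℝ)
    (hc : ∀ e, 0 ≤ c e) (hr : ∀ e, 0 ≤ r e)
    (hn : 2 ≤ Fintype.card V)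
    (s t : V) (hst : s ≠ t) (R : ℝ) (hR : 0 ≤ R)
    -- `Copt` is the minimum cost of a feasible s–t path
    (Copt : ℝ)
    (hCopt₁ : ∃ p, IsPath tl hd s t p ∧ (p.map r).sum ≤ R ∧ (p.map c).sum = Copt)
    (hCopt₂ : ∀ p, IsPath tl hd s t p → (p.map r).sum ≤ R → Copt ≤ (p.map c).sum)
    (S : ℝ) (hS : 0 < S)
    -- `CoptS` is the minimum ceiling-scaled cost of a feasible s–t path
    (CoptS : ℝ)
    (hCoptS₁ : ∃ p, IsPath tl hd s t p ∧ (p.map r).sum ≤ R ∧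
      (p.map fun e => (⌊c e / S⌋ : ℝ) + 1).sum = CoptS)
    (hCoptS₂ : ∀ p, IsPath tl hd s t p → (p.map r).sum ≤ R →
      CoptS ≤ (p.map fun e => (⌊c e / S⌋ : ℝ) + 1).sum) :
    Copt / S ≤ CoptS ∧ CoptS ≤ Copt / S + Fintype.card V :=
  stmt_1_general tl hd c r s t R Copt hCopt₁ hCopt₂ S hS CoptS hCoptS₁ hCoptS₂
end

section
/- For every scaling factor S > 0 and every feasible s–t path p* that is optimal for the ceiling-scaled cost (i.e. C_{G↑S}(p*) = C_opt(G↑S)), the original cost of p* satisfies C_G(p*) ≤ C_opt(G) + S·n. -/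
/-- Lemma: for every scaling factor `S > 0` and every feasible s–t path `p⋆`
minimizing the ceiling-scaled cost among feasible s–t paths,
`C_G(p⋆) ≤ C_opt(G) + S·n`. -/
theorem stmt_2 {V E : Type} [Fintype V] [Fintype E]
    (tl hd : E → V) (c r : E → ℝ)
    (hc : ∀ e, 0 ≤ c e) (hr : ∀ e, 0 ≤ r e)
    (hn : 2 ≤ Fintype.card V)
    (s t : V) (hst : s ≠ t) (R : ℝ) (hR : 0 ≤ R)
    -- `Copt` is the minimum cost of a feasible s–t path
    (Copt : ℝ)
    (hCopt₁ : ∃ p, IsPath tl hd s t p ∧ (p.map r).sum ≤ R ∧ (p.map c).sum = Copt)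
    (hCopt₂ : ∀ p, IsPath tl hd s t p → (p.map r).sum ≤ R → Copt ≤ (p.map c).sum)
    (S : ℝ) (hS : 0 < S)
    -- `pstar` is a feasible s–t path of minimum ceiling-scaled cost
    (pstar : List E)
    (hp₁ : IsPath tl hd s t pstar) (hp₂ : (pstar.map r).sum ≤ R)
    (hp₃ : ∀ q, IsPath tl hd s t q → (q.map r).sum ≤ R →
      (pstar.map fun e => (⌊c e / S⌋ : ℝ) + 1).sum ≤
        (q.map fun e => (⌊c e / S⌋ : ℝ) + 1).sum) :
    (pstar.map c).sum ≤ Copt + S * Fintype.card V := by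

  obtain ⟨p, hp, hpr, hpc⟩ := hCopt₁
  have hlen : (p.length : ℝ) ≤ Fintype.card V := by
    have h := List.Nodup.length_le_card hp.2
    simp only [List.length_cons, List.length_map] at h
    exact_mod_cast le_trans (Nat.le_succ _) h
  have h1 : (pstar.map c).sum ≤ S * (pstar.map fun e => (⌊c e / S⌋ : ℝ) + 1).sum := by
    rw [← List.sum_map_mul_left]
    apply List.sum_le_sum
    intro e _
    have h := (div_lt_iff₀ hS).mp (Int.lt_floor_add_one (c e / S))
    rw [mul_comm]; linarith
  have h2 : S * (pstar.map fun e => (⌊c e / S⌋ : ℝ) + 1).sum ≤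
      S * (p.map fun e => (⌊c e / S⌋ : ℝ) + 1).sum :=
    mul_le_mul_of_nonneg_left (hp₃ p hp hpr) hS.le
  have h3 : S * (p.map fun e => (⌊c e / S⌋ : ℝ) + 1).sum ≤
      (p.map c).sum + S * p.length := by
    rw [← List.sum_map_mul_left]
    have : ((p.map fun e => c e + S).sum) = (p.map c).sum + S * p.length := by
      induction p with
      | nil => simp
      | cons a l ih => simp [ih]; ring
    rw [← this]
    apply List.sum_le_sum
    intro e _
    have h := (le_div_iff₀ hS).mp (Int.floor_le (c e / S))
    rw [mul_add, mul_one, mul_comm]; linarith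
  have h4 : S * (p.length : ℝ) ≤ S * Fintype.card V :=
    mul_le_mul_of_nonneg_left hlen hS.le
  linarith
end

section
/- Let ε > 0 and S > 0 satisfy S·n ≤ ε·C_opt(G). Then every feasible s–t path p* that minimizes the ceiling-scaled cost C_{G↑S} among feasible s–t paths is a (1 + ε)-approximation, i.e. C_G(p*) ≤ (1 + ε)·C_opt(G). -/
private lemma sum_map_le {E : Type} (g h : E → ℝ) (l : List E)
    (hgh : ∀ e, g e ≤ h e) : (l.map g).sum ≤ (l.map h).sum := by
  induction l with
  | nil => simp
  | cons a l ih => simp only [List.map_cons, List.sum_cons]; have := hgh a; linarith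

private lemma sum_map_le' {E : Type} (g h : E → ℝ) (S : ℝ) (l : List E)
    (hgh : ∀ e, g e ≤ h e + S) :
    (l.map g).sum ≤ (l.map h).sum + l.length * S := by
  induction l with
  | nil => simp
  | cons a l ih =>
    simp only [List.map_cons, List.sum_cons, List.length_cons]
    have := hgh a
    push_cast
    linarith

private lemma sum_map_mul {E : Type} (S : ℝ) (g : E → ℝ) (l : List E) :
    S * (l.map g).sum = (l.map fun e => S * g e).sum := by
  induction l with
  | nil => simp
  | cons a l ih => simp only [List.map_cons, List.sum_cons]; ring_nf; linarith

/-- Lemma: if `ε > 0`, `S > 0` and `S·n ≤ ε·C_opt(G)`, then every feasible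
s–t path minimizing the ceiling-scaled cost is a `(1+ε)`-approximation. -/
theorem stmt_3 {V E : Type} [Fintype V] [Fintype E]
    (tl hd : E → V) (c r : E → ℝ)
    (hc : ∀ e, 0 ≤ c e) (hr : ∀ e, 0 ≤ r e)
    (hn : 2 ≤ Fintype.card V)
    (s t : V) (hst : s ≠ t) (R : ℝ) (hR : 0 ≤ R)
    -- `Copt` is the minimum cost of a feasible s–t path
    (Copt : ℝ)
    (hCopt₁ : ∃ p, IsPath tl hd s t p ∧ (p.map r).sum ≤ R ∧ (p.map c).sum = Copt)
    (hCopt₂ : ∀ p, IsPath tl hd s t p → (p.map r).sum ≤ R → Copt ≤ (p.map c).sum)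
    (ε S : ℝ) (hε : 0 < ε) (hS : 0 < S)
    (hSn : S * Fintype.card V ≤ ε * Copt)
    -- `pstar` is a feasible s–t path of minimum ceiling-scaled cost
    (pstar : List E)
    (hp₁ : IsPath tl hd s t pstar) (hp₂ : (pstar.map r).sum ≤ R)
    (hp₃ : ∀ q, IsPath tl hd s t q → (q.map r).sum ≤ R →
      (pstar.map fun e => (⌊c e / S⌋ : ℝ) + 1).sum ≤
        (q.map fun e => (⌊c e / S⌋ : ℝ) + 1).sum) :
    (pstar.map c).sum ≤ (1 + ε) * Copt := by
  obtain ⟨p0, hp0path, hp0r, hp0c⟩ := hCopt₁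
  set f : E → ℝ := fun e => (⌊c e / S⌋ : ℝ) + 1 with hf
  -- termwise bounds
  have key1 : ∀ e, c e ≤ S * f e := by
    intro e
    have h := Int.lt_floor_add_one (c e / S)
    have := (div_lt_iff₀ hS).mp h
    simp only [hf]
    linarith
  have key2 : ∀ e, S * f e ≤ c e + S := by
    intro e
    have h := Int.floor_le (c e / S)
    have h2 : (⌊c e / S⌋ : ℝ) * S ≤ c e := by
      have := mul_le_mul_of_nonneg_right h hS.le
      rwa [div_mul_cancel₀ _ hS.ne'] at this
    simp only [hf]
    nlinarith [h2]
  -- length bound for p0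
  have hlen : (p0.length : ℝ) + 1 ≤ (Fintype.card V : ℝ) := by
    have := List.Nodup.length_le_card hp0path.2
    simp only [List.length_cons, List.length_map] at this
    exact_mod_cast this
  -- chain of inequalities
  have A : (pstar.map c).sum ≤ S * (pstar.map f).sum := by
    rw [sum_map_mul]
    exact sum_map_le _ _ _ key1
  have B : S * (pstar.map f).sum ≤ S * (p0.map f).sum := by
    have := hp₃ p0 hp0path hp0r
    exact mul_le_mul_of_nonneg_left this hS.le
  have C : S * (p0.map f).sum ≤ (p0.map c).sum + p0.length * S := by
    rw [sum_map_mul]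
    exact sum_map_le' _ _ _ _ key2
  have D : (p0.length : ℝ) * S ≤ ε * Copt := by
    have h1 : (p0.length : ℝ) * S ≤ (Fintype.card V : ℝ) * S := by
      apply mul_le_mul_of_nonneg_right _ hS.le
      linarith
    nlinarith
  linarith [hp0c ▸ A.trans (B.trans C)]
end

section
/- Let θ ≥ 0 be such that (i) there exists a feasible s–t path all of whose edges have cost c(e) ≤ θ, and (ii) every feasible s–t path contains at least one edge with cost c(e) ≥ θ. Then θ ≤ C_opt(G) ≤ n·θ. -/
theorem le_sum_map_of_exists_le {E : Type} {c : E → ℝ} (hc : ∀ e, 0 ≤ c e) {p : List E} {θ : ℝ}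
    (h : ∃ e ∈ p, θ ≤ c e) : θ ≤ (p.map c).sum := by
  obtain ⟨e, he, hθe⟩ := h
  refine hθe.trans (List.single_le_sum ?_ _ (List.mem_map_of_mem he))
  simpa using fun e _ => hc e

theorem sum_map_le_length_mul {E : Type} {c : E → ℝ} {p : List E} {θ : ℝ}
    (h : ∀ e ∈ p, c e ≤ θ) : (p.map c).sum ≤ p.length * θ := by
  simpa using List.sum_le_card_nsmul (p.map c) θ (by simpa using h)

theorem stmt_4_general {V E : Type} [Fintype V]
    (tl hd : E → V) (c r : E → ℝ)
    (hc : ∀ e, 0 ≤ c e)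
    (s t : V) (R : ℝ)
    -- `Copt` is the minimum cost of a feasible s–t path
    (Copt : ℝ)
    (hCopt₁ : ∃ p, IsPath tl hd s t p ∧ (p.map r).sum ≤ R ∧ (p.map c).sum = Copt)
    (hCopt₂ : ∀ p, IsPath tl hd s t p → (p.map r).sum ≤ R → Copt ≤ (p.map c).sum)
    (θ : ℝ) (hθ : 0 ≤ θ)
    (hlow : ∃ p, IsPath tl hd s t p ∧ (p.map r).sum ≤ R ∧ ∀ e ∈ p, c e ≤ θ)
    (hhigh : ∀ p, IsPath tl hd s t p → (p.map r).sum ≤ R → ∃ e ∈ p, θ ≤ c e) :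
    θ ≤ Copt ∧ Copt ≤ Fintype.card V * θ := by
  constructor
  · obtain ⟨p, hp, hpr, rfl⟩ := hCopt₁
    exact le_sum_map_of_exists_le hc (hhigh p hp hpr)
  · obtain ⟨p, hp, hpr, hpθ⟩ := hlow
    have hlen : (p.length : ℝ) ≤ Fintype.card V := by exact_mod_cast hp.length_lt_card.le
    calc Copt ≤ (p.map c).sum := hCopt₂ p hp hpr
      _ ≤ p.length * θ := sum_map_le_length_mul hpθ
      _ ≤ Fintype.card V * θ := mul_le_mul_of_nonneg_right hlen hθ

/-- Lemma: if some feasible s–t path uses only edges of cost `≤ θ`, and every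
feasible s–t path contains an edge of cost `≥ θ`, then `θ ≤ C_opt(G) ≤ n·θ`. -/
theorem stmt_4 {V E : Type} [Fintype V] [Fintype E]
    (tl hd : E → V) (c r : E → ℝ)
    (hc : ∀ e, 0 ≤ c e) (hr : ∀ e, 0 ≤ r e)
    (hn : 2 ≤ Fintype.card V)
    (s t : V) (hst : s ≠ t) (R : ℝ) (hR : 0 ≤ R)
    -- `Copt` is the minimum cost of a feasible s–t path
    (Copt : ℝ)
    (hCopt₁ : ∃ p, IsPath tl hd s t p ∧ (p.map r).sum ≤ R ∧ (p.map c).sum = Copt)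
    (hCopt₂ : ∀ p, IsPath tl hd s t p → (p.map r).sum ≤ R → Copt ≤ (p.map c).sum)
    (θ : ℝ) (hθ : 0 ≤ θ)
    (hlow : ∃ p, IsPath tl hd s t p ∧ (p.map r).sum ≤ R ∧ ∀ e ∈ p, c e ≤ θ)
    (hhigh : ∀ p, IsPath tl hd s t p → (p.map r).sum ≤ R → ∃ e ∈ p, θ ≤ c e) :
    θ ≤ Copt ∧ Copt ≤ Fintype.card V * θ :=
  stmt_4_general tl hd c r hc s t R Copt hCopt₁ hCopt₂ θ hθ hlow hhigh
end

section
/- Let S > 0 and suppose C_opt(G↑S) ≥ 2n. Then L' := S·(C_opt(G↑S) − n) and U' := S·C_opt(G↑S) satisfy L' ≤ C_opt(G) ≤ U' and U' ≤ 2·L'. -/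

private lemma sum_map_mul_aux {E : Type} (S : ℝ) (f : E → ℝ) (l : List E) :
    (l.map fun e => S * f e).sum = S * (l.map f).sum := by
  induction l with
  | nil => simp
  | cons a l ih => simp [ih, mul_add]

private lemma sum_map_div_add_one_aux {E : Type} (S : ℝ) (f : E → ℝ) (l : List E) :
    (l.map fun e => f e / S + 1).sum = (l.map f).sum / S + l.length := by
  induction l with
  | nil => simp
  | cons a l ih =>
    simp only [List.map_cons, List.sum_cons, ih, List.length_cons]
    push_cast
    ring

/-- Lemma: if `S > 0` and the ceiling-scaled optimum `CoptS` satisfies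
`CoptS ≥ 2n`, then `L' = S·(CoptS − n)` and `U' = S·CoptS` are lower and upper
bounds for `C_opt(G)` with `U' ≤ 2·L'`. -/
theorem stmt_6 {V E : Type} [Fintype V] [Fintype E]
    (tl hd : E → V) (c r : E → ℝ)
    (hc : ∀ e, 0 ≤ c e) (hr : ∀ e, 0 ≤ r e)
    (hn : 2 ≤ Fintype.card V)
    (s t : V) (hst : s ≠ t) (R : ℝ) (hR : 0 ≤ R)
    -- `Copt` is the minimum cost of a feasible s–t path
    (Copt : ℝ)
    (hCopt₁ : ∃ p, IsPath tl hd s t p ∧ (p.map r).sum ≤ R ∧ (p.map c).sum = Copt)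
    (hCopt₂ : ∀ p, IsPath tl hd s t p → (p.map r).sum ≤ R → Copt ≤ (p.map c).sum)
    (S : ℝ) (hS : 0 < S)
    -- `CoptS` is the minimum ceiling-scaled cost of a feasible s–t path
    (CoptS : ℝ)
    (hCoptS₁ : ∃ p, IsPath tl hd s t p ∧ (p.map r).sum ≤ R ∧
      (p.map fun e => (⌊c e / S⌋ : ℝ) + 1).sum = CoptS)
    (hCoptS₂ : ∀ p, IsPath tl hd s t p → (p.map r).sum ≤ R →
      CoptS ≤ (p.map fun e => (⌊c e / S⌋ : ℝ) + 1).sum)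
    (h2n : 2 * (Fintype.card V : ℝ) ≤ CoptS) :
    S * (CoptS - Fintype.card V) ≤ Copt ∧ Copt ≤ S * CoptS ∧
      S * CoptS ≤ 2 * (S * (CoptS - Fintype.card V)) := by
  classical
  obtain ⟨p, hp, hpr, hpc⟩ := hCopt₁
  obtain ⟨q, hq, hqr, hqc⟩ := hCoptS₁
  have hplen : (p.length : ℝ) ≤ Fintype.card V := by
    have h := hp.2.length_le_card
    simp at h
    exact_mod_cast Nat.le_of_succ_le h
  have hub : Copt ≤ S * CoptS := by
    have h1 : Copt ≤ (q.map c).sum := hCopt₂ q hq hqr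
    have h2 : (q.map c).sum ≤ (q.map fun e => S * ((⌊c e / S⌋ : ℝ) + 1)).sum := by
      apply List.sum_le_sum
      intro e _
      have h := (div_lt_iff₀ hS).mp (Int.lt_floor_add_one (c e / S))
      linarith
    rw [sum_map_mul_aux, hqc] at h2
    linarith
  have hsum1 : (p.map fun e => (⌊c e / S⌋ : ℝ) + 1).sum
      ≤ (p.map fun e => c e / S + 1).sum := by
    apply List.sum_le_sum
    intro e _
    have := Int.floor_le (c e / S)
    linarith
  rw [sum_map_div_add_one_aux, hpc] at hsum1
  have h4 : CoptS ≤ Copt / S + p.length := le_trans (hCoptS₂ p hp hpr) hsum1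
  have hlb : S * (CoptS - Fintype.card V) ≤ Copt := by
    have h5 : CoptS - (Fintype.card V : ℝ) ≤ Copt / S := by linarith
    have h6 := mul_le_mul_of_nonneg_left h5 hS.le
    rw [mul_div_cancel₀ _ (ne_of_gt hS)] at h6
    linarith
  refine ⟨hlb, hub, ?_⟩
  nlinarith
end

section
/- Let S_0 > 0, let S_i := 2^{−i}·S_0 for i ∈ ℕ, let b ∈ ℕ, and let i* ∈ ℕ be the least index with C_opt(G↓S_{i*}) > b (assume such an index exists). Then for every i ∈ ℕ with i < i*, C_opt(G↓S_i) ≤ 2^{i + 1 − i*}·b. -/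
/-- Lemma: with scaling factors `S i = 2^(-i)·S₀` and `i⋆` the least index such
that the floor-scaled optimum `Cf i⋆` exceeds `b`, for every `i < i⋆` we have
`Cf i ≤ 2^(i+1-i⋆)·b`. -/
theorem stmt_8 {V E : Type} [Fintype V] [Fintype E]
    (tl hd : E → V) (c r : E → ℝ)
    (hc : ∀ e, 0 ≤ c e) (hr : ∀ e, 0 ≤ r e)
    (hn : 2 ≤ Fintype.card V)
    (s t : V) (hst : s ≠ t) (R : ℝ) (hR : 0 ≤ R)
    (S₀ : ℝ) (hS₀ : 0 < S₀)
    (S : ℕ → ℝ) (hS : ∀ i : ℕ, S i = (2 : ℝ) ^ (-(i : ℤ)) * S₀)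
    -- `Cf i` is the minimum floor-scaled cost (scaling factor `S i`) of a feasible s–t path
    (Cf : ℕ → ℝ)
    (hCf₁ : ∀ i : ℕ, ∃ p, IsPath tl hd s t p ∧ (p.map r).sum ≤ R ∧
      (p.map fun e => (⌊c e / S i⌋ : ℝ)).sum = Cf i)
    (hCf₂ : ∀ i : ℕ, ∀ p, IsPath tl hd s t p → (p.map r).sum ≤ R →
      Cf i ≤ (p.map fun e => (⌊c e / S i⌋ : ℝ)).sum)
    (b : ℕ)
    -- `istar` is the least index with `Cf istar > b`
    (istar : ℕ) (histar : (b : ℝ) < Cf istar)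
    (hleast : ∀ j : ℕ, j < istar → Cf j ≤ (b : ℝ)) :
    ∀ i : ℕ, i < istar → Cf i ≤ (2 : ℝ) ^ ((i : ℤ) + 1 - (istar : ℤ)) * b := by

  intro i hi
  have histar1 : 1 ≤ istar := by omega
  set k := istar - 1 - i with hk
  have hj : i + k = istar - 1 := by omega
  set j := i + k with hjdef
  have hjlt : j < istar := by omega
  have hizk : (i : ℤ) + 1 - (istar : ℤ) = -(k : ℤ) := by omega
  obtain ⟨p, hp, hpr, hps⟩ := hCf₁ j
  have h1 : Cf i ≤ (p.map fun e => (⌊c e / S i⌋ : ℝ)).sum := hCf₂ i p hp hpr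
  have h2k : (0:ℝ) < 2 ^ k := by positivity
  have hprod : S j * 2 ^ k = S i := by
    rw [hS, hS, mul_right_comm]
    congr 1
    rw [← zpow_natCast (2:ℝ) k, ← zpow_add₀ (two_ne_zero)]
    congr 1
    omega
  have hedge : ∀ e ∈ p, (⌊c e / S i⌋ : ℝ) ≤ (⌊c e / S j⌋ : ℝ) / 2 ^ k := by
    intro e _
    have hdiv : c e / S i = (c e / S j) / (2:ℝ) ^ k := by
      rw [div_div, hprod]
    rw [hdiv]
    set a := c e / S j with ha
    have hfl : (⌊a / 2 ^ k⌋ * 2 ^ k : ℤ) ≤ ⌊a⌋ := by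
      apply Int.le_floor.mpr
      push_cast
      rw [← le_div_iff₀ h2k]
      exact Int.floor_le _
    rw [le_div_iff₀ h2k]
    calc (⌊a / 2 ^ k⌋ : ℝ) * 2 ^ k = ((⌊a / 2 ^ k⌋ * 2 ^ k : ℤ) : ℝ) := by push_cast; ring
      _ ≤ (⌊a⌋ : ℝ) := by exact_mod_cast hfl
  have h2 : (p.map fun e => (⌊c e / S i⌋ : ℝ)).sum
      ≤ (p.map fun e => (⌊c e / S j⌋ : ℝ) / 2 ^ k).sum := List.sum_le_sum hedge
  have h3 : (p.map fun e => (⌊c e / S j⌋ : ℝ) / 2 ^ k).sum = Cf j / 2 ^ k := by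
    rw [← hps]
    simp only [div_eq_mul_inv]
    exact List.sum_map_mul_right p _ _
  have h4 : Cf j / 2 ^ k ≤ (b : ℝ) / 2 ^ k := by
    gcongr
    exact hleast j hjlt
  rw [hizk, zpow_neg, zpow_natCast, inv_mul_eq_div]
  calc Cf i ≤ (p.map fun e => (⌊c e / S i⌋ : ℝ)).sum := h1
    _ ≤ (p.map fun e => (⌊c e / S j⌋ : ℝ) / 2 ^ k).sum := h2
    _ = Cf j / 2 ^ k := h3
    _ ≤ (b : ℝ) / 2 ^ k := h4
end

section
/- Let U be an upper bound for C_opt(G), let S_i := 2^{−i}·U/(2n) for i ∈ ℕ, let b ∈ ℕ with b ≥ 1, and let i* be the least index with C_opt(G↓S_{i*}) > b (assume such an index exists). Define L' := b·S_{i*}, and U' := U if i* = 0 and U' := 2·S_{i*}·(b + n) if i* > 0. Then L' ≤ C_opt(G) ≤ U' and U'/L' ≤ 2 + 2n/b. -/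
section FloorScaling

variable {E : Type} (p : List E) (c : E → ℝ) {S : ℝ}

theorem mul_sum_floor_div_le (hS : 0 < S) :
    S * (p.map fun e => (⌊c e / S⌋ : ℝ)).sum ≤ (p.map c).sum := by
  rw [← List.sum_map_mul_left]
  exact List.sum_le_sum fun e _ => (le_div_iff₀' hS).mp (Int.floor_le _)

theorem sum_le_mul_sum_floor_div_add_length (hS : 0 < S) :
    (p.map c).sum ≤ S * ((p.map fun e => (⌊c e / S⌋ : ℝ)).sum + p.length) :=
  calc (p.map c).sum
      ≤ (p.map fun e => S * ((⌊c e / S⌋ : ℝ) + 1)).sum :=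
        List.sum_le_sum fun e _ => ((div_lt_iff₀' hS).mp (Int.lt_floor_add_one _)).le
    _ = S * ((p.map fun e => (⌊c e / S⌋ : ℝ)).sum + p.length) := by
        simp [List.sum_map_mul_left, List.sum_map_add]

variable {P : List E → Prop} {Copt Cf : ℝ}

theorem mul_le_opt_of_le_scaled (hS : 0 < S) (hopt : ∃ p, P p ∧ (p.map c).sum = Copt)
    (hCf : ∀ p, P p → Cf ≤ (p.map fun e => (⌊c e / S⌋ : ℝ)).sum) : S * Cf ≤ Copt := by
  obtain ⟨p, hp, rfl⟩ := hopt
  exact (mul_le_mul_of_nonneg_left (hCf p hp) hS.le).trans (mul_sum_floor_div_le p c hS)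

theorem opt_le_mul_scaled_add {n : ℕ} (hS : 0 < S) (hlen : ∀ p, P p → p.length ≤ n)
    (hopt : ∀ p, P p → Copt ≤ (p.map c).sum)
    (hCf : ∃ p, P p ∧ (p.map fun e => (⌊c e / S⌋ : ℝ)).sum = Cf) : Copt ≤ S * (Cf + n) := by
  obtain ⟨p, hp, rfl⟩ := hCf
  calc Copt ≤ (p.map c).sum := hopt p hp
    _ ≤ S * ((p.map fun e => (⌊c e / S⌋ : ℝ)).sum + p.length) :=
        sum_le_mul_sum_floor_div_add_length p c hS
    _ ≤ _ := by gcongr; exact_mod_cast hlen p hp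

end FloorScaling

theorem div_mul_le_two_add_two_mul_div {x S b n : ℝ} (hS : 0 < S) (hb : 0 ≤ b)
    (hx : x ≤ 2 * S * (b + n)) : x / (b * S) ≤ 2 + 2 * n / b :=
  calc x / (b * S)
      ≤ 2 * S * (b + n) / (b * S) := div_le_div_of_nonneg_right hx (by positivity)
    _ = 2 * (b / b) + 2 * n / b := by field_simp
    _ ≤ 2 + 2 * n / b := by linarith [div_self_le_one b]

theorem stmt_9_general {V E : Type} [Fintype V]
    (tl hd : E → V) (c r : E → ℝ)
    (s t : V) (R : ℝ)
    -- `Copt` is the minimum cost of a feasible s–t path; it is positive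
    (Copt : ℝ) (hCpos : 0 < Copt)
    (hCopt₁ : ∃ p, IsPath tl hd s t p ∧ (p.map r).sum ≤ R ∧ (p.map c).sum = Copt)
    (hCopt₂ : ∀ p, IsPath tl hd s t p → (p.map r).sum ≤ R → Copt ≤ (p.map c).sum)
    (U : ℝ) (hU : Copt ≤ U)
    (S : ℕ → ℝ)
    (hS : ∀ i : ℕ, S i = (2 : ℝ) ^ (-(i : ℤ)) * U / (2 * Fintype.card V))
    -- `Cf i` is the minimum floor-scaled cost (scaling factor `S i`) of a feasible s–t path
    (Cf : ℕ → ℝ)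
    (hCf₁ : ∀ i : ℕ, ∃ p, IsPath tl hd s t p ∧ (p.map r).sum ≤ R ∧
      (p.map fun e => (⌊c e / S i⌋ : ℝ)).sum = Cf i)
    (hCf₂ : ∀ i : ℕ, ∀ p, IsPath tl hd s t p → (p.map r).sum ≤ R →
      Cf i ≤ (p.map fun e => (⌊c e / S i⌋ : ℝ)).sum)
    (b : ℕ)
    -- `istar` is the least index with `Cf istar > b`
    (istar : ℕ) (histar : (b : ℝ) < Cf istar)
    (hleast : ∀ j : ℕ, j < istar → Cf j ≤ (b : ℝ))
    (L' U' : ℝ) (hL' : L' = b * S istar)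
    (hU' : U' = if istar = 0 then U else 2 * S istar * (b + Fintype.card V)) :
    L' ≤ Copt ∧ Copt ≤ U' ∧ U' / L' ≤ 2 + 2 * Fintype.card V / b := by
  have hn : (0 : ℝ) < Fintype.card V := by
    have : Nonempty V := ⟨s⟩
    exact_mod_cast Fintype.card_pos
  have hU0 : 0 < U := hCpos.trans_le hU
  have hSpos : ∀ i, 0 < S i := fun i => by rw [hS]; positivity
  have hS_succ : ∀ j, S j = 2 * S (j + 1) := fun j => by
    rw [hS, hS, Nat.cast_succ, neg_add, zpow_add₀ two_ne_zero, zpow_neg_one]; ring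
  let feasible (p : List E) : Prop := IsPath tl hd s t p ∧ (p.map r).sum ≤ R
  have hlow : L' ≤ Copt := by
    obtain ⟨p, hp, hpR, hpc⟩ := hCopt₁
    calc L' ≤ S istar * Cf istar := by rw [hL', mul_comm]; gcongr; exact (hSpos istar).le
      _ ≤ Copt := mul_le_opt_of_le_scaled (P := feasible) c (hSpos istar) ⟨p, ⟨hp, hpR⟩, hpc⟩
          fun p hp => hCf₂ istar p hp.1 hp.2
  have hupper : ∀ i, Copt ≤ S i * (Cf i + Fintype.card V) := fun i => by
    obtain ⟨p, hp, hpR, hpCf⟩ := hCf₁ i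
    exact opt_le_mul_scaled_add (P := feasible) c (hSpos i) (fun p hp => hp.1.length_lt_card.le)
      (fun p hp => hCopt₂ p hp.1 hp.2) ⟨p, ⟨hp, hpR⟩, hpCf⟩
  have hCopt_le : Copt ≤ U' := by
    rcases istar with _ | j
    · simpa [hU'] using hU
    · calc Copt ≤ S j * (Cf j + Fintype.card V) := hupper j
        _ ≤ S j * (b + Fintype.card V) := by
            gcongr; exacts [(hSpos j).le, hleast j j.lt_succ_self]
        _ = U' := by rw [hU', if_neg j.succ_ne_zero, hS_succ]
  have hU'_le : U' ≤ 2 * S istar * (b + Fintype.card V) := by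
    rcases istar with _ | j
    · calc U' = 2 * S 0 * Fintype.card V := by rw [hU', if_pos rfl, hS 0]; field_simp; simp
        _ ≤ 2 * S 0 * (b + Fintype.card V) := by
            have := hSpos 0; gcongr; exact le_add_of_nonneg_left b.cast_nonneg
    · rw [hU', if_neg j.succ_ne_zero]
  exact ⟨hlow, hCopt_le, hL' ▸ div_mul_le_two_add_two_mul_div (hSpos istar) b.cast_nonneg hU'_le⟩

/-- Lemma: with `U ≥ C_opt(G)`, scaling factors `S i = 2^(-i)·U/(2n)`, `b ≥ 1`
and `i⋆` the least index whose floor-scaled optimum exceeds `b`, the bounds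
`L' = b·S i⋆` and `U' = U` (if `i⋆ = 0`) resp. `U' = 2·S i⋆·(b+n)` (if `i⋆ > 0`)
satisfy `L' ≤ C_opt(G) ≤ U'` and `U'/L' ≤ 2 + 2n/b`. -/
theorem stmt_9 {V E : Type} [Fintype V] [Fintype E]
    (tl hd : E → V) (c r : E → ℝ)
    (hc : ∀ e, 0 ≤ c e) (hr : ∀ e, 0 ≤ r e)
    (hn : 2 ≤ Fintype.card V)
    (s t : V) (hst : s ≠ t) (R : ℝ) (hR : 0 ≤ R)
    -- `Copt` is the minimum cost of a feasible s–t path; it is positive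
    (Copt : ℝ) (hCpos : 0 < Copt)
    (hCopt₁ : ∃ p, IsPath tl hd s t p ∧ (p.map r).sum ≤ R ∧ (p.map c).sum = Copt)
    (hCopt₂ : ∀ p, IsPath tl hd s t p → (p.map r).sum ≤ R → Copt ≤ (p.map c).sum)
    (U : ℝ) (hU : Copt ≤ U)
    (S : ℕ → ℝ)
    (hS : ∀ i : ℕ, S i = (2 : ℝ) ^ (-(i : ℤ)) * U / (2 * Fintype.card V))
    -- `Cf i` is the minimum floor-scaled cost (scaling factor `S i`) of a feasible s–t path
    (Cf : ℕ → ℝ)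
    (hCf₁ : ∀ i : ℕ, ∃ p, IsPath tl hd s t p ∧ (p.map r).sum ≤ R ∧
      (p.map fun e => (⌊c e / S i⌋ : ℝ)).sum = Cf i)
    (hCf₂ : ∀ i : ℕ, ∀ p, IsPath tl hd s t p → (p.map r).sum ≤ R →
      Cf i ≤ (p.map fun e => (⌊c e / S i⌋ : ℝ)).sum)
    (b : ℕ) (hb : 1 ≤ b)
    -- `istar` is the least index with `Cf istar > b`
    (istar : ℕ) (histar : (b : ℝ) < Cf istar)
    (hleast : ∀ j : ℕ, j < istar → Cf j ≤ (b : ℝ))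
    (L' U' : ℝ) (hL' : L' = b * S istar)
    (hU' : U' = if istar = 0 then U else 2 * S istar * (b + Fintype.card V)) :
    L' ≤ Copt ∧ Copt ≤ U' ∧ U' / L' ≤ 2 + 2 * Fintype.card V / b :=
  stmt_9_general tl hd c r s t R Copt hCpos hCopt₁ hCopt₂ U hU S hS Cf hCf₁ hCf₂ b istar histar
    hleast L' U' hL' hU'
end

section
/- Suppose 0 < L ≤ C_opt(G) ≤ U with U = n·L, and let S := 2^{−⌈log₂ n⌉}·U/(2n). Then C_opt(G↓S) ≥ n; in particular C_opt(G↓S) ≥ b for every natural number b ≤ n. -/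
theorem List.sum_map_div_sub_length_le_sum_map_floor_s10 {E : Type} (c : E → ℝ) (S : ℝ)
    (p : List E) : (p.map c).sum / S - p.length ≤ (p.map fun e => (⌊c e / S⌋ : ℝ)).sum := by
  induction p with
  | nil => simp
  | cons e es ih =>
    have hfloor := Int.sub_one_lt_floor (c e / S)
    simp only [List.map_cons, List.sum_cons, List.length_cons, add_div, Nat.cast_add,
      Nat.cast_one]
    linarith

theorem natCast_le_two_pow_natCeil_logb (n : ℕ) : (n : ℝ) ≤ 2 ^ ⌈Real.logb 2 n⌉₊ := by
  have h := Real.natCeil_logb_natCast 2 n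
  rw [Nat.cast_ofNat] at h
  rw [h]
  exact_mod_cast Nat.le_pow_clog one_lt_two n

theorem two_zpow_neg_natCeil_logb_mul_le_one (n : ℕ) :
    (2 : ℝ) ^ (-(⌈Real.logb 2 n⌉₊ : ℤ)) * n ≤ 1 := by
  rw [zpow_neg, zpow_natCast, inv_mul_le_one₀ (by positivity)]
  exact natCast_le_two_pow_natCeil_logb n

theorem stmt_10_general {V E : Type} [Fintype V]
    (tl hd : E → V) (c r : E → ℝ)
    (s t : V) (R : ℝ)
    -- `Copt` is the minimum cost of a feasible s–t path
    (Copt : ℝ)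
    (hCopt₂ : ∀ p, IsPath tl hd s t p → (p.map r).sum ≤ R → Copt ≤ (p.map c).sum)
    (L U : ℝ) (hL : 0 < L) (hLC : L ≤ Copt)
    (hUnL : U = Fintype.card V * L)
    (S : ℝ)
    (hSdef : S = (2 : ℝ) ^ (-(⌈Real.logb 2 (Fintype.card V : ℝ)⌉₊ : ℤ)) * U /
      (2 * Fintype.card V))
    -- `CoptS` is the minimum floor-scaled cost of a feasible s–t path
    (CoptS : ℝ)
    (hCoptS₁ : ∃ p, IsPath tl hd s t p ∧ (p.map r).sum ≤ R ∧
      (p.map fun e => (⌊c e / S⌋ : ℝ)).sum = CoptS) :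
    (Fintype.card V : ℝ) ≤ CoptS ∧
      ∀ b : ℕ, b ≤ Fintype.card V → (b : ℝ) ≤ CoptS := by
  set n := Fintype.card V
  have hn : (0 : ℝ) < n := by exact_mod_cast Fintype.card_pos_iff.mpr ⟨s⟩
  have hS : 0 < S := by rw [hSdef, hUnL]; positivity
  have hscale : 2 * n * S ≤ L := by
    have h := two_zpow_neg_natCeil_logb_mul_le_one n
    rw [hSdef, hUnL, mul_div_cancel₀ _ (by positivity), ← mul_assoc]
    nlinarith
  obtain ⟨p, hp, hpR, rfl⟩ := hCoptS₁
  have hlen : (p.length : ℝ) + 1 ≤ n := by exact_mod_cast hp.length_lt_card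
  have hcost : L / S ≤ (p.map c).sum / S :=
    div_le_div_of_nonneg_right (hLC.trans (hCopt₂ p hp hpR)) hS.le
  have hnS : 2 * n ≤ L / S := (le_div_iff₀ hS).mpr hscale
  have hmain : (n : ℝ) ≤ (p.map fun e => (⌊c e / S⌋ : ℝ)).sum := by
    linarith [p.sum_map_div_sub_length_le_sum_map_floor_s10 c S]
  exact ⟨hmain, fun b hb => le_trans (by exact_mod_cast hb) hmain⟩

/-- Lemma: if `0 < L ≤ C_opt(G) ≤ U` with `U = n·L` and
`S = 2^(-⌈log₂ n⌉)·U/(2n)`, then the floor-scaled optimum at scaling factor `S`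
is at least `n`, hence at least `b` for every natural number `b ≤ n`. -/
theorem stmt_10 {V E : Type} [Fintype V] [Fintype E]
    (tl hd : E → V) (c r : E → ℝ)
    (hc : ∀ e, 0 ≤ c e) (hr : ∀ e, 0 ≤ r e)
    (hn : 2 ≤ Fintype.card V)
    (s t : V) (hst : s ≠ t) (R : ℝ) (hR : 0 ≤ R)
    -- `Copt` is the minimum cost of a feasible s–t path
    (Copt : ℝ)
    (hCopt₁ : ∃ p, IsPath tl hd s t p ∧ (p.map r).sum ≤ R ∧ (p.map c).sum = Copt)
    (hCopt₂ : ∀ p, IsPath tl hd s t p → (p.map r).sum ≤ R → Copt ≤ (p.map c).sum)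
    (L U : ℝ) (hL : 0 < L) (hLC : L ≤ Copt) (hCU : Copt ≤ U)
    (hUnL : U = Fintype.card V * L)
    (S : ℝ)
    (hSdef : S = (2 : ℝ) ^ (-(⌈Real.logb 2 (Fintype.card V : ℝ)⌉₊ : ℤ)) * U /
      (2 * Fintype.card V))
    -- `CoptS` is the minimum floor-scaled cost of a feasible s–t path
    (CoptS : ℝ)
    (hCoptS₁ : ∃ p, IsPath tl hd s t p ∧ (p.map r).sum ≤ R ∧
      (p.map fun e => (⌊c e / S⌋ : ℝ)).sum = CoptS)
    (hCoptS₂ : ∀ p, IsPath tl hd s t p → (p.map r).sum ≤ R →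
      CoptS ≤ (p.map fun e => (⌊c e / S⌋ : ℝ)).sum) :
    (Fintype.card V : ℝ) ≤ CoptS ∧
      ∀ b : ℕ, b ≤ Fintype.card V → (b : ℝ) ≤ CoptS :=
  stmt_10_general tl hd c r s t R Copt hCopt₂ L U hL hLC hUnL S hSdef CoptS hCoptS₁
end

section
/- Assume the cost function c takes values in ℕ. For u ∈ V and i ∈ ℤ define r'_{u,i} := min over all edges e ∈ E with head(e) = u and c(e) ≥ 1 of ( r_{tail(e), i − c(e)} + r(e) ) (∞ if no such edge exists), and for u, v ∈ V define d₀(u, v) ∈ [0, ∞] as the minimum of R_G(p) over paths from u to v that use only edges of cost 0 (with d₀(u, u) = 0 via the empty path, and ∞ if no such path exists). Then for every v ∈ V and every i ≥ 0: r_{v,i} = min( d₀(s, v), min over u ∈ V with u ≠ s of ( r'_{u,i} + d₀(u, v) ) ). -/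
open scoped ENNReal

/-- `rDP tl hd c r s v i` is the value `r_{v,i} ∈ [0,∞]`: the minimum resource
consumption of a path from `s` to `v` of cost at most `i`, and `∞` if no such
path exists. -/
noncomputable def rDP {V E : Type} (tl hd : E → V) (c : E → ℕ) (r : E → ℝ)
    (s v : V) (i : ℤ) : ℝ≥0∞ :=
  ⨅ (p : List E) (_ : IsPath tl hd s v p ∧ ((p.map c).sum : ℤ) ≤ i),
    ENNReal.ofReal ((p.map r).sum)

/-- `rDP' tl hd c r s u i` is the value `r'_{u,i}`: the minimum over all edges
`e` into `u` of positive cost of `r_{tail e, i - c e} + r e` (`∞` if no such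
edge exists). -/
noncomputable def rDP' {V E : Type} (tl hd : E → V) (c : E → ℕ) (r : E → ℝ)
    (s u : V) (i : ℤ) : ℝ≥0∞ :=
  ⨅ (e : E) (_ : hd e = u ∧ 1 ≤ c e),
    rDP tl hd c r s (tl e) (i - c e) + ENNReal.ofReal (r e)

/-- `dZero tl hd c r u v` is the minimum resource consumption of a path from
`u` to `v` using only zero-cost edges (`∞` if no such path exists; `0` for
`u = v` via the empty path). -/
noncomputable def dZero {V E : Type} (tl hd : E → V) (c : E → ℕ) (r : E → ℝ)
    (u v : V) : ℝ≥0∞ :=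
  ⨅ (p : List E) (_ : IsPath tl hd u v p ∧ ∀ e ∈ p, c e = 0),
    ENNReal.ofReal ((p.map r).sum)

/-!
Split a path `p` from `s` to `v` of cost at most `i` at its last edge `e` of positive cost.
The prefix is a path to `tl e` of cost at most `i - c e` and the suffix is a zero-cost path
from `hd e ≠ s` to `v`, so `r'_{hd e, i} + d₀(hd e, v)` is at most the resource of `p`; if
there is no such edge, `p` itself is counted by `d₀(s, v)`. Conversely, concatenating the
three pieces gives a walk of cost at most `i`, which shortens to a path without increasing
cost or resource since both are nonnegative.
-/

section Paths

variable {V E : Type} {tl hd : E → V}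

theorem isWalk_append_iff {u w : V} {p q : List E} :
    IsWalk tl hd u w (p ++ q) ↔ ∃ v, IsWalk tl hd u v p ∧ IsWalk tl hd v w q := by
  induction p generalizing u with
  | nil => exact ⟨fun h => ⟨u, rfl, h⟩, fun ⟨_, huv, h⟩ => huv ▸ h⟩
  | cons e p ih =>
    simp only [List.cons_append, IsWalk, ih]
    exact ⟨fun ⟨he, v, hp, hq⟩ => ⟨v, ⟨he, hp⟩, hq⟩,
      fun ⟨v, ⟨he, hp⟩, hq⟩ => ⟨he, v, hp, hq⟩⟩

theorem IsPath.tail {u v : V} {e : E} {p : List E} (h : IsPath tl hd u v (e :: p)) :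
    IsPath tl hd (hd e) v p :=
  ⟨h.1.2, (List.nodup_cons.1 h.2).2⟩

theorem IsPath.exists_sublist_of_mem {u v w : V} {p : List E} (h : IsPath tl hd u v p)
    (hw : w ∈ u :: p.map hd) : ∃ q, q.Sublist p ∧ IsPath tl hd w v q := by
  induction p generalizing u with
  | nil =>
    obtain rfl : w = u := by simpa using hw
    exact ⟨[], .slnil, h⟩
  | cons e p ih =>
    rcases List.mem_cons.1 hw with rfl | hw
    · exact ⟨e :: p, .refl _, h⟩
    · obtain ⟨q, hqp, hq⟩ := ih h.tail hw
      exact ⟨q, hqp.cons e, hq⟩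

theorem IsWalk.exists_isPath_sublist {u v : V} {p : List E} (h : IsWalk tl hd u v p) :
    ∃ q, q.Sublist p ∧ IsPath tl hd u v q := by
  induction p generalizing u with
  | nil => exact ⟨[], .slnil, h, List.nodup_singleton u⟩
  | cons e p ih =>
    obtain ⟨q, hqp, hq⟩ := ih h.2
    by_cases hu : u ∈ hd e :: q.map hd
    · obtain ⟨q', hq'q, hq'⟩ := hq.exists_sublist_of_mem hu
      exact ⟨q', (hq'q.trans hqp).cons e, hq'⟩
    · exact ⟨e :: q, hqp.cons_cons e, ⟨h.1, hq.1⟩, List.nodup_cons.2 ⟨hu, hq.2⟩⟩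

theorem IsPath.of_append_cons {u v : V} {p q : List E} {e : E}
    (h : IsPath tl hd u v (p ++ e :: q)) :
    IsPath tl hd u (tl e) p ∧ IsPath tl hd (hd e) v q ∧ hd e ≠ u := by
  obtain ⟨hw, hnd⟩ := h
  obtain ⟨x, hp, rfl, hq⟩ := isWalk_append_iff.1 hw
  simp only [List.map_append, List.map_cons] at hnd
  refine ⟨⟨hp, (List.cons_sublist_cons.2 (List.sublist_append_left _ _)).nodup hnd⟩,
    ⟨hq, ((List.sublist_append_right _ _).trans (List.sublist_cons_self u _)).nodup hnd⟩, ?_⟩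
  intro heu
  exact (List.nodup_cons.1 hnd).1 (heu ▸ List.mem_append_right _ List.mem_cons_self)

end Paths

theorem List.exists_eq_append_cons_forall_of_not_forall {α : Type*} {P : α → Prop}
    {l : List α} (h : ¬ ∀ a ∈ l, P a) :
    ∃ l₁ a l₂, l = l₁ ++ a :: l₂ ∧ ¬ P a ∧ ∀ b ∈ l₂, P b := by
  induction l with
  | nil => simp at h
  | cons a l ih =>
    by_cases hl : ∀ b ∈ l, P b
    · exact ⟨[], a, l, rfl, fun ha => h (List.forall_mem_cons.2 ⟨ha, hl⟩), hl⟩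
    · obtain ⟨l₁, b, l₂, rfl, hb, hl₂⟩ := ih hl
      exact ⟨a :: l₁, b, l₂, rfl, hb, hl₂⟩

section ResourceConstrainedPaths

variable {V E : Type} {tl hd : E → V} {c : E → ℕ} {r : E → ℝ}

theorem ofReal_sum_map (hr : ∀ e, 0 ≤ r e) (p : List E) :
    ENNReal.ofReal (p.map r).sum = (p.map fun e => ENNReal.ofReal (r e)).sum := by
  induction p with
  | nil => simp
  | cons e p ih =>
    rw [List.map_cons, List.sum_cons, ENNReal.ofReal_add (hr e)
      (List.sum_nonneg (by simpa using fun e _ => hr e)), ih, List.map_cons, List.sum_cons]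

theorem sum_map_eq_zero_of_forall {p : List E} (h : ∀ e ∈ p, c e = 0) : (p.map c).sum = 0 :=
  List.sum_eq_zero (by simpa using h)

theorem rDP_le_dZero {s v : V} {i : ℤ} (hi : 0 ≤ i) :
    rDP tl hd c r s v i ≤ dZero tl hd c r s v :=
  le_iInf₂ fun p ⟨hp, hc⟩ =>
    iInf₂_le p ⟨hp, by rw [sum_map_eq_zero_of_forall hc]; exact_mod_cast hi⟩

theorem rDP_le_rDP'_add_dZero (hr : ∀ e, 0 ≤ r e) (s u v : V) (i : ℤ) :
    rDP tl hd c r s v i ≤ rDP' tl hd c r s u i + dZero tl hd c r u v := by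
  refine ENNReal.le_iInf_add_iInf fun e q =>
    ENNReal.le_iInf_add_iInf fun ⟨rfl, _⟩ ⟨hq, hq0⟩ => ?_
  conv_rhs => rw [add_assoc, rDP, ENNReal.iInf_add]
  refine le_iInf fun p => ?_
  rw [ENNReal.iInf_add]
  refine le_iInf fun ⟨hp, hpc⟩ => ?_
  obtain ⟨p', hp'sub, hp'⟩ :=
    (isWalk_append_iff (q := e :: q) |>.2 ⟨tl e, hp.1, rfl, hq.1⟩).exists_isPath_sublist
  have hcost : (p'.map c).sum ≤ (p.map c).sum + c e := by
    have := (hp'sub.map c).sum_le_sum fun _ _ => Nat.zero_le _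
    simpa [sum_map_eq_zero_of_forall hq0] using this
  have hres := (hp'sub.map fun e => ENNReal.ofReal (r e)).sum_le_sum fun _ _ => zero_le
  refine iInf₂_le_of_le p' ⟨hp', by omega⟩ ?_
  simpa [ofReal_sum_map hr, add_assoc] using hres

theorem min_dZero_iInf_le_of_isPath (hr : ∀ e, 0 ≤ r e) {s v : V} {i : ℤ} {p : List E}
    (hp : IsPath tl hd s v p) (hpc : ((p.map c).sum : ℤ) ≤ i) :
    min (dZero tl hd c r s v)
        (⨅ (u : V) (_ : u ≠ s), rDP' tl hd c r s u i + dZero tl hd c r u v) ≤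
      ENNReal.ofReal (p.map r).sum := by
  by_cases hz : ∀ e ∈ p, c e = 0
  · exact min_le_of_left_le (iInf₂_le p ⟨hp, hz⟩)
  obtain ⟨p₁, e, p₂, rfl, he, hp₂0⟩ := List.exists_eq_append_cons_forall_of_not_forall hz
  obtain ⟨hp₁, hp₂, hes⟩ := hp.of_append_cons
  have hp₁c : ((p₁.map c).sum : ℤ) ≤ i - c e := by
    simp only [List.map_append, List.map_cons, List.sum_append, List.sum_cons,
      sum_map_eq_zero_of_forall hp₂0, add_zero, Nat.cast_add] at hpc
    omega
  have hrDP' :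
      rDP' tl hd c r s (hd e) i ≤ ENNReal.ofReal (p₁.map r).sum + ENNReal.ofReal (r e) :=
    iInf₂_le_of_le e ⟨rfl, Nat.one_le_iff_ne_zero.2 he⟩
      (add_le_add_left (iInf₂_le p₁ ⟨hp₁, hp₁c⟩) _)
  have hd₀ : dZero tl hd c r (hd e) v ≤ ENNReal.ofReal (p₂.map r).sum :=
    iInf₂_le p₂ ⟨hp₂, hp₂0⟩
  refine min_le_of_right_le (iInf₂_le_of_le (hd e) hes ?_)
  calc rDP' tl hd c r s (hd e) i + dZero tl hd c r (hd e) v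
      ≤ ENNReal.ofReal (p₁.map r).sum + ENNReal.ofReal (r e) +
          ENNReal.ofReal (p₂.map r).sum :=
        add_le_add hrDP' hd₀
    _ = ENNReal.ofReal ((p₁ ++ e :: p₂).map r).sum := by
        simp only [ofReal_sum_map hr]
        simp [add_assoc]

end ResourceConstrainedPaths

theorem stmt_13_general {V E : Type}
    (tl hd : E → V) (c : E → ℕ) (r : E → ℝ) (hr : ∀ e, 0 ≤ r e)
    (s : V) :
    ∀ v : V, ∀ i : ℤ, 0 ≤ i →
      rDP tl hd c r s v i =
        min (dZero tl hd c r s v)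
          (⨅ (u : V) (_ : u ≠ s), rDP' tl hd c r s u i + dZero tl hd c r u v) := by
  intro v i hi
  refine le_antisymm ?_ (le_iInf₂ fun p ⟨hp, hpc⟩ => min_dZero_iInf_le_of_isPath hr hp hpc)
  exact le_min (rDP_le_dZero hi) (le_iInf₂ fun u _ => rDP_le_rDP'_add_dZero hr s u v i)

/-- Lemma: with natural-number costs, for every vertex `v` and every `i ≥ 0`,
`r_{v,i} = min (d₀(s,v), min over u ≠ s of (r'_{u,i} + d₀(u,v)))`. -/
theorem stmt_13 {V E : Type} [Fintype V] [Fintype E]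
    (tl hd : E → V) (c : E → ℕ) (r : E → ℝ) (hr : ∀ e, 0 ≤ r e)
    (hn : 2 ≤ Fintype.card V) (s : V) :
    ∀ v : V, ∀ i : ℤ, 0 ≤ i →
      rDP tl hd c r s v i =
        min (dZero tl hd c r s v)
          (⨅ (u : V) (_ : u ≠ s), rDP' tl hd c r s u i + dZero tl hd c r u v) :=
  stmt_13_general tl hd c r hr s
end
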